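/- arXiv:2111.08607 — 3 statements merged into one kernel-verified Lean document; each statement's English description precedes it below -/
import Mathlib

section
/- Let g be a positive integer and let A be a symmetric g×g matrix with entries in the field ℤ/2ℤ all of whose diagonal entries are zero. Then A has rank 2 if and only if there exist an integer m equal to 2 or 3 and pairwise disjoint nonempty subsets S₁,…,S_m of the index set {1,…,g} such that for all indices i, j one has A i j = 1 if and only if there exist a ≠ b with i ∈ S_a and j ∈ S_b (i.e., the support of A is the adjacency pattern of a complete bipartite or complete tripartite graph, with all other indices isolated). -/
open Finset Submodule Module

namespace RankTwoHelper

/-- The three nonzero labels in `ZMod 2 × ZMod 2`. -/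
def lab : Fin 3 → ZMod 2 × ZMod 2 := ![(1,0),(0,1),(1,1)]

lemma lab_inj : Function.Injective lab := by decide

lemma lab_ne_zero : ∀ a, lab a ≠ (0,0) := by decide

lemma lab_surj : ∀ x : ZMod 2 × ZMod 2, x ≠ (0,0) → ∃ a, lab a = x := by decide

lemma not1 : ∀ x : ZMod 2, x ≠ 1 → x = 0 := by decide

lemma zmod_cases : ∀ x : ZMod 2, x = 0 ∨ x = 1 := by decide

/-- If every entry satisfies the rank-one-plus-rank-one formula, the rank is 2. -/
lemma rank_two_of_formula {g : ℕ} (A : Matrix (Fin g) (Fin g) (ZMod 2))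
    (p q : Fin g) (hpq : A p q = 1) (hqp : A q p = 1) (hpp : A p p = 0) (hqq : A q q = 0)
    (hf : ∀ i j, A i j = A i q * A j p + A j q * A i p) : A.rank = 2 := by
  set u : Fin g → ZMod 2 := fun i => A i q with hu
  set v : Fin g → ZMod 2 := fun i => A i p with hv
  have hcolu : A.mulVecLin (Pi.single q 1) = u := by
    funext i; simp [Matrix.mulVecLin_apply, hu]
  have hcolv : A.mulVecLin (Pi.single p 1) = v := by
    funext i; simp [Matrix.mulVecLin_apply, hv]
  have hrange : LinearMap.range A.mulVecLin = span (ZMod 2) {u, v} := by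
    apply le_antisymm
    · rintro _ ⟨x, rfl⟩
      have hx : A.mulVecLin x = (∑ j, v j * x j) • u + (∑ j, u j * x j) • v := by
        funext i
        simp only [Matrix.mulVecLin_apply, Matrix.mulVec, dotProduct, Pi.add_apply,
          Pi.smul_apply, smul_eq_mul, dotProduct]
        calc ∑ j, A i j * x j
            = ∑ j, ((v j * x j) * u i + (u j * x j) * v i) := by
              refine Finset.sum_congr rfl fun j _ => ?_
              rw [hf i j]; simp only [hu, hv]; ring
          _ = (∑ j, v j * x j) * u i + (∑ j, u j * x j) * v i := by
              rw [Finset.sum_add_distrib, ← Finset.sum_mul, ← Finset.sum_mul]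
      rw [hx]
      exact add_mem (smul_mem _ _ (subset_span (by simp)))
        (smul_mem _ _ (subset_span (by simp)))
    · rw [span_le]
      rintro y hy
      simp only [Set.mem_insert_iff, Set.mem_singleton_iff] at hy
      rcases hy with rfl | rfl
      · exact ⟨Pi.single q 1, hcolu⟩
      · exact ⟨Pi.single p 1, hcolv⟩
  have hli : LinearIndependent (ZMod 2) ![u, v] := by
    rw [LinearIndependent.pair_iff]
    intro s t hst
    have h1 := congrFun hst p
    have h2 := congrFun hst q
    simp only [Pi.add_apply, Pi.smul_apply, smul_eq_mul, hu, hv, Pi.zero_apply,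
      hpq, hqp, hpp, hqq, mul_one, mul_zero, add_zero, zero_add] at h1 h2
    exact ⟨h1, h2⟩
  have hsp : ({u, v} : Set (Fin g → ZMod 2)) = Set.range ![u, v] := by
    ext y
    simp [Fin.exists_fin_two, eq_comm, or_comm]
  have : A.rank = finrank (ZMod 2) ↥(LinearMap.range A.mulVecLin) := rfl
  rw [this, hrange, hsp, finrank_span_eq_card hli, Fintype.card_fin]

/-- Rank 2 gives the formula. -/
lemma formula_of_rank_two {g : ℕ} (A : Matrix (Fin g) (Fin g) (ZMod 2)) (hA : A.IsSymm)
    (hdiag : ∀ i, A i i = 0) (hr : A.rank = 2) :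
    ∃ p q, A p q = 1 ∧ ∀ i j, A i j = A i q * A j p + A j q * A i p := by
  have hsymm : ∀ a b, A a b = A b a := fun a b => hA.apply b a
  obtain ⟨p, q, hne⟩ : ∃ p q, A p q ≠ 0 := by
    by_contra hc
    push_neg at hc
    have hz : A = 0 := by ext i j; exact hc i j
    rw [hz, Matrix.rank_zero] at hr
    omega
  have hpq : A p q = 1 := by
    rcases zmod_cases (A p q) with h | h
    · exact absurd h hne
    · exact h
  have hqp : A q p = 1 := (hsymm q p).trans hpq
  set u : Fin g → ZMod 2 := fun i => A i q with hu
  set v : Fin g → ZMod 2 := fun i => A i p with hv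
  have hcolu : A.mulVecLin (Pi.single q 1) = u := by
    funext i; simp [Matrix.mulVecLin_apply, hu]
  have hcolv : A.mulVecLin (Pi.single p 1) = v := by
    funext i; simp [Matrix.mulVecLin_apply, hv]
  have hle : span (ZMod 2) {u, v} ≤ LinearMap.range A.mulVecLin := by
    rw [span_le]
    rintro y hy
    simp only [Set.mem_insert_iff, Set.mem_singleton_iff] at hy
    rcases hy with rfl | rfl
    · exact ⟨Pi.single q 1, hcolu⟩
    · exact ⟨Pi.single p 1, hcolv⟩
  have hli : LinearIndependent (ZMod 2) ![u, v] := by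
    rw [LinearIndependent.pair_iff]
    intro s t hst
    have h1 := congrFun hst p
    have h2 := congrFun hst q
    simp only [Pi.add_apply, Pi.smul_apply, smul_eq_mul, hu, hv, Pi.zero_apply,
      hpq, hqp, hdiag p, hdiag q, mul_one, mul_zero, add_zero, zero_add] at h1 h2
    exact ⟨h1, h2⟩
  have hsp : ({u, v} : Set (Fin g → ZMod 2)) = Set.range ![u, v] := by
    ext y
    simp [Fin.exists_fin_two, eq_comm, or_comm]
  have hfr : finrank (ZMod 2) ↥(span (ZMod 2) {u, v}) = 2 := by
    rw [hsp, finrank_span_eq_card hli, Fintype.card_fin]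
  have hrnk : A.rank = finrank (ZMod 2) ↥(LinearMap.range A.mulVecLin) := rfl
  have heq : span (ZMod 2) {u, v} = LinearMap.range A.mulVecLin := by
    apply Submodule.eq_of_le_of_finrank_le hle
    rw [hfr, ← hrnk, hr]
  refine ⟨p, q, hpq, fun i j => ?_⟩
  have hcol : (fun i => A i j) ∈ span (ZMod 2) ({u, v} : Set (Fin g → ZMod 2)) := by
    rw [heq]
    exact ⟨Pi.single j 1, by funext i; simp [Matrix.mulVecLin_apply]⟩
  obtain ⟨s, t, hst⟩ := Submodule.mem_span_pair.mp hcol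
  have h1 := congrFun hst p
  have h2 := congrFun hst q
  have h3 := congrFun hst i
  simp only [Pi.add_apply, Pi.smul_apply, smul_eq_mul, hu, hv,
    hpq, hqp, hdiag p, hdiag q, mul_one, mul_zero, add_zero, zero_add] at h1 h2 h3
  rw [← h3, h1, h2, hsymm j p, hsymm j q]
  ring

lemma good3_of_formula {g : ℕ} (A : Matrix (Fin g) (Fin g) (ZMod 2))
    (p q : Fin g) (hpq : A p q = 1) (hqp : A q p = 1) (hpp : A p p = 0) (hqq : A q q = 0)
    (hf : ∀ i j, A i j = A i q * A j p + A j q * A i p) :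
    ∃ S : Fin 3 → Finset (Fin g), (S 0).Nonempty ∧ (S 1).Nonempty ∧
      (∀ a b, a ≠ b → Disjoint (S a) (S b)) ∧
      (∀ i j, A i j = 1 ↔ ∃ a b, a ≠ b ∧ i ∈ S a ∧ j ∈ S b) := by
  refine ⟨fun a => univ.filter (fun i => (A i q, A i p) = lab a), ⟨p, ?_⟩, ⟨q, ?_⟩, ?_, ?_⟩
  · simp only [mem_filter, mem_univ, true_and, hpq, hpp]; rfl
  · simp only [mem_filter, mem_univ, true_and, hqq, hqp]; rfl
  · intro a b hab
    rw [Finset.disjoint_left]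
    intro i hi hj
    simp only [mem_filter, mem_univ, true_and] at hi hj
    exact hab (lab_inj (hi.symm.trans hj))
  · intro i j
    have key : ∀ x1 x2 y1 y2 : ZMod 2, x1 * y2 + y1 * x2 = 1 ↔
        ((x1, x2) ≠ ((0 : ZMod 2), (0 : ZMod 2)) ∧ (y1, y2) ≠ ((0 : ZMod 2), (0 : ZMod 2)) ∧
          (x1, x2) ≠ (y1, y2)) := by decide
    rw [hf i j, key]
    constructor
    · rintro ⟨hi0, hj0, hij⟩
      obtain ⟨a, ha⟩ := lab_surj _ hi0
      obtain ⟨b, hb⟩ := lab_surj _ hj0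
      refine ⟨a, b, ?_, ?_, ?_⟩
      · rintro rfl; exact hij (ha.symm.trans hb)
      · simp only [mem_filter, mem_univ, true_and]; exact ha.symm
      · simp only [mem_filter, mem_univ, true_and]; exact hb.symm
    · rintro ⟨a, b, hab, hi, hj⟩
      simp only [mem_filter, mem_univ, true_and] at hi hj
      refine ⟨?_, ?_, ?_⟩
      · rw [hi]; exact lab_ne_zero a
      · rw [hj]; exact lab_ne_zero b
      · rw [hi, hj]; intro h; exact hab (lab_inj h)

lemma rank_two_of_good3 {g : ℕ} (A : Matrix (Fin g) (Fin g) (ZMod 2))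
    (S : Fin 3 → Finset (Fin g)) (h0 : (S 0).Nonempty) (h1 : (S 1).Nonempty)
    (hdisj : ∀ a b, a ≠ b → Disjoint (S a) (S b))
    (hiff : ∀ i j, A i j = 1 ↔ ∃ a b, a ≠ b ∧ i ∈ S a ∧ j ∈ S b) :
    A.rank = 2 := by
  obtain ⟨p, hp⟩ := h0
  obtain ⟨q, hq⟩ := h1
  have huniq : ∀ i (a b : Fin 3), i ∈ S a → i ∈ S b → a = b := by
    intro i a b ha hb
    by_contra hab
    exact Finset.disjoint_left.mp (hdisj a b hab) ha hb
  have hlabel : ∀ i, ((∀ a, i ∉ S a) ∧ (A i q, A i p) = ((0 : ZMod 2), (0 : ZMod 2))) ∨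
      ∃ a, i ∈ S a ∧ (A i q, A i p) = lab a := by
    intro i
    by_cases hmem : ∃ a, i ∈ S a
    · obtain ⟨a, ha⟩ := hmem
      right
      refine ⟨a, ha, ?_⟩
      have hq1 : A i q = 1 ↔ a ≠ 1 := by
        rw [hiff]
        constructor
        · rintro ⟨c, d, hcd, hic, hqd⟩
          have hd1 : d = 1 := huniq q d 1 hqd hq
          have hca : c = a := huniq i c a hic ha
          rw [← hca, ← hd1]; exact hcd
        · intro ha1; exact ⟨a, 1, ha1, ha, hq⟩
      have hp1 : A i p = 1 ↔ a ≠ 0 := by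
        rw [hiff]
        constructor
        · rintro ⟨c, d, hcd, hic, hpd⟩
          have hd0 : d = 0 := huniq p d 0 hpd hp
          have hca : c = a := huniq i c a hic ha
          rw [← hca, ← hd0]; exact hcd
        · intro ha0; exact ⟨a, 0, ha0, ha, hp⟩
      fin_cases a
      · have e1 : A i q = 1 := hq1.mpr (by decide)
        have e2 : A i p = 0 := not1 _ (fun h => (hp1.mp h) rfl)
        rw [e1, e2]; rfl
      · have e1 : A i q = 0 := not1 _ (fun h => (hq1.mp h) rfl)
        have e2 : A i p = 1 := hp1.mpr (by decide)
        rw [e1, e2]; rfl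
      · have e1 : A i q = 1 := hq1.mpr (by decide)
        have e2 : A i p = 1 := hp1.mpr (by decide)
        rw [e1, e2]; rfl
    · push_neg at hmem
      left
      refine ⟨hmem, ?_⟩
      have e1 : A i q = 0 := not1 _ (fun h => by
        obtain ⟨c, d, _, hic, _⟩ := (hiff i q).mp h
        exact hmem c hic)
      have e2 : A i p = 0 := not1 _ (fun h => by
        obtain ⟨c, d, _, hic, _⟩ := (hiff i p).mp h
        exact hmem c hic)
      rw [e1, e2]
  have hf : ∀ i j, A i j = A i q * A j p + A j q * A i p := by
    intro i j
    rcases hlabel i with ⟨hni, hli⟩ | ⟨a, hia, hli⟩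
    · have h0 : A i j = 0 := not1 _ (fun h => by
        obtain ⟨c, d, _, hic, _⟩ := (hiff i j).mp h
        exact hni c hic)
      have e1 : A i q = 0 := congrArg Prod.fst hli
      have e2 : A i p = 0 := congrArg Prod.snd hli
      rw [h0, e1, e2]; ring
    · rcases hlabel j with ⟨hnj, hlj⟩ | ⟨b, hjb, hlj⟩
      · have h0 : A i j = 0 := not1 _ (fun h => by
          obtain ⟨c, d, _, _, hjd⟩ := (hiff i j).mp h
          exact hnj d hjd)
        have e1 : A j q = 0 := congrArg Prod.fst hlj
        have e2 : A j p = 0 := congrArg Prod.snd hlj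
        rw [h0, e1, e2]; ring
      · have e1 : A i q = (lab a).1 := congrArg Prod.fst hli
        have e2 : A i p = (lab a).2 := congrArg Prod.snd hli
        have e3 : A j q = (lab b).1 := congrArg Prod.fst hlj
        have e4 : A j p = (lab b).2 := congrArg Prod.snd hlj
        by_cases hab : a = b
        · subst hab
          have h0 : A i j = 0 := not1 _ (fun h => by
            obtain ⟨c, d, hcd, hic, hjd⟩ := (hiff i j).mp h
            exact hcd ((huniq i c a hic hia).trans (huniq j a d hjb hjd)))
          have hz : ∀ a : Fin 3, (lab a).1 * (lab a).2 + (lab a).1 * (lab a).2 = 0 := by decide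
          rw [h0, e1, e2, e3, e4, hz]
        · have h0 : A i j = 1 := (hiff i j).mpr ⟨a, b, hab, hia, hjb⟩
          have hv : ∀ a b : Fin 3, a ≠ b →
              (lab a).1 * (lab b).2 + (lab b).1 * (lab a).2 = 1 := by decide
          rw [h0, e1, e2, e3, e4, hv a b hab]
  have hApq : A p q = 1 := (hiff p q).mpr ⟨0, 1, by decide, hp, hq⟩
  have hAqp : A q p = 1 := (hiff q p).mpr ⟨1, 0, by decide, hq, hp⟩
  have hApp : A p p = 0 := not1 _ (fun h => by
    obtain ⟨c, d, hcd, hpc, hpd⟩ := (hiff p p).mp h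
    exact hcd ((huniq p c d hpc hpd)))
  have hAqq : A q q = 0 := not1 _ (fun h => by
    obtain ⟨c, d, hcd, hqc, hqd⟩ := (hiff q q).mp h
    exact hcd ((huniq q c d hqc hqd)))
  exact rank_two_of_formula A p q hApq hAqp hApp hAqq hf

end RankTwoHelper

theorem rank_two_iff_complete_multipartite
    (g : ℕ) (hg : 0 < g) (A : Matrix (Fin g) (Fin g) (ZMod 2)) (hA : A.IsSymm)
    (hdiag : ∀ i, A i i = 0) :
    A.rank = 2 ↔ ∃ m : ℕ, (m = 2 ∨ m = 3) ∧ ∃ S : Fin m → Finset (Fin g),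
      (∀ a, (S a).Nonempty) ∧
      (∀ a b, a ≠ b → Disjoint (S a) (S b)) ∧
      (∀ i j, A i j = 1 ↔ ∃ a b, a ≠ b ∧ i ∈ S a ∧ j ∈ S b) := by
  open RankTwoHelper in
  constructor
  · intro hr
    obtain ⟨p, q, hpq, hf⟩ := RankTwoHelper.formula_of_rank_two A hA hdiag hr
    have hqp : A q p = 1 := (hA.apply p q).trans hpq
    obtain ⟨S, h0, h1, hdisj, hiff⟩ :=
      RankTwoHelper.good3_of_formula A p q hpq hqp (hdiag p) (hdiag q) hf
    by_cases h2 : (S 2).Nonempty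
    · refine ⟨3, Or.inr rfl, S, ?_, hdisj, hiff⟩
      intro a
      fin_cases a <;> assumption
    · have hS2 : S 2 = ∅ := Finset.not_nonempty_iff_eq_empty.mp h2
      have f3 : ∀ a : Fin 3, a ≠ 2 → a = 0 ∨ a = 1 := by decide
      refine ⟨2, Or.inl rfl, ![S 0, S 1], ?_, ?_, ?_⟩
      · intro a
        fin_cases a
        · exact h0
        · exact h1
      · intro a b hab
        fin_cases a <;> fin_cases b
        · exact absurd rfl hab
        · exact hdisj 0 1 (by decide)
        · exact hdisj 1 0 (by decide)
        · exact absurd rfl hab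
      · intro i j
        rw [hiff i j]
        constructor
        · rintro ⟨a, b, hab, hi, hj⟩
          have ha2 : a ≠ 2 := by
            rintro rfl; rw [hS2] at hi; exact absurd hi (Finset.notMem_empty i)
          have hb2 : b ≠ 2 := by
            rintro rfl; rw [hS2] at hj; exact absurd hj (Finset.notMem_empty j)
          rcases f3 a ha2 with rfl | rfl <;> rcases f3 b hb2 with rfl | rfl
          · exact absurd rfl hab
          · exact ⟨0, 1, by decide, hi, hj⟩
          · exact ⟨1, 0, by decide, hi, hj⟩
          · exact absurd rfl hab
        · rintro ⟨a, b, hab, hi, hj⟩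
          have f2 : ∀ a : Fin 2, a = 0 ∨ a = 1 := by decide
          rcases f2 a with rfl | rfl <;> rcases f2 b with rfl | rfl
          · exact absurd rfl hab
          · exact ⟨0, 1, by decide, hi, hj⟩
          · exact ⟨1, 0, by decide, hi, hj⟩
          · exact absurd rfl hab
  · rintro ⟨m, hm, S, hne, hdisj, hiff⟩
    rcases hm with rfl | rfl
    · refine RankTwoHelper.rank_two_of_good3 A ![S 0, S 1, ∅] (hne 0) (hne 1) ?_ ?_
      · intro a b hab
        fin_cases a <;> fin_cases b <;>
          first
            | exact absurd rfl hab
            | exact hdisj 0 1 (by decide)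
            | exact hdisj 1 0 (by decide)
            | exact Finset.disjoint_empty_right _
            | exact Finset.disjoint_empty_left _
      · intro i j
        rw [hiff i j]
        have f3 : ∀ a : Fin 3, a ≠ 2 → a = 0 ∨ a = 1 := by decide
        have f2 : ∀ a : Fin 2, a = 0 ∨ a = 1 := by decide
        constructor
        · rintro ⟨a, b, hab, hi, hj⟩
          rcases f2 a with rfl | rfl <;> rcases f2 b with rfl | rfl
          · exact absurd rfl hab
          · exact ⟨0, 1, by decide, hi, hj⟩
          · exact ⟨1, 0, by decide, hi, hj⟩
          · exact absurd rfl hab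
        · rintro ⟨a, b, hab, hi, hj⟩
          have ha2 : a ≠ 2 := by
            rintro rfl; exact absurd hi (Finset.notMem_empty i)
          have hb2 : b ≠ 2 := by
            rintro rfl; exact absurd hj (Finset.notMem_empty j)
          rcases f3 a ha2 with rfl | rfl <;> rcases f3 b hb2 with rfl | rfl
          · exact absurd rfl hab
          · exact ⟨0, 1, by decide, hi, hj⟩
          · exact ⟨1, 0, by decide, hi, hj⟩
          · exact absurd rfl hab
    · exact RankTwoHelper.rank_two_of_good3 A S (hne 0) (hne 1) hdisj hiff
end

section
/- Let V₁, V₂, V₃ be nonempty finite types. The adjacency matrix, with entries in the field ℤ/2ℤ, of the complete tripartite graph on the disjoint union of V₁, V₂, V₃ (two vertices adjacent exactly when they lie in different parts) has rank 2. -/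
theorem rank_adjMatrix_completeTripartiteGraph
    (V : Fin 3 → Type*) [∀ i, Fintype (V i)] [∀ i, Nonempty (V i)]
    [∀ i, DecidableEq (V i)]
    [DecidableRel (SimpleGraph.completeMultipartiteGraph V).Adj] :
    ((SimpleGraph.completeMultipartiteGraph V).adjMatrix (ZMod 2)).rank = 2 := by
  classical
  set A := (SimpleGraph.completeMultipartiteGraph V).adjMatrix (ZMod 2) with hA
  have hAentry : ∀ u v : Σ i, V i, A u v = if u.1 = v.1 then 0 else 1 := by
    intro u v
    simp only [hA, SimpleGraph.adjMatrix_apply, SimpleGraph.comap_adj, SimpleGraph.top_adj]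
    split <;> simp_all
  -- rank-2 factorization
  let p : Fin 3 → Fin 2 → ZMod 2 := ![![1, 0], ![0, 1], ![1, 1]]
  let q : Fin 2 → Fin 3 → ZMod 2 := ![![0, 1, 1], ![1, 0, 1]]
  let P : Matrix (Σ i, V i) (Fin 2) (ZMod 2) := fun u k => p u.1 k
  let Q : Matrix (Fin 2) (Σ i, V i) (ZMod 2) := fun k v => q k v.1
  have hfac : A = P * Q := by
    ext u v
    obtain ⟨i, x⟩ := u
    obtain ⟨j, y⟩ := v
    rw [hAentry, Matrix.mul_apply]
    simp only [P, Q, Fin.sum_univ_two]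
    fin_cases i <;> fin_cases j <;> simp [p, q, Matrix.vecHead, Matrix.vecTail] <;> decide
  have hle : A.rank ≤ 2 := by
    calc A.rank = (P * Q).rank := by rw [hfac]
    _ ≤ P.rank := Matrix.rank_mul_le_left P Q
    _ ≤ Fintype.card (Fin 2) := Matrix.rank_le_card_width P
    _ = 2 := by simp
  -- lower bound
  let r : Fin 2 → Σ i, V i := fun j => ⟨j.castSucc, Classical.arbitrary _⟩
  let B : Matrix (Fin 2) (Σ i, V i) (ZMod 2) := fun j v => if v = r j then 1 else 0
  let C : Matrix (Σ i, V i) (Fin 2) (ZMod 2) := fun v j => if v = r j then 1 else 0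
  have hBAC : B * A * C = !![0, 1; 1, 0] := by
    ext j k
    have : (B * A * C) j k = A (r j) (r k) := by
      rw [Matrix.mul_apply]
      rw [Finset.sum_eq_single (r k)]
      · rw [Matrix.mul_apply, Finset.sum_eq_single (r j)]
        · simp [B, C]
        · intro b _ hb; simp [B, hb]
        · simp
      · intro b _ hb; simp [C, hb]
      · simp
    rw [this, hAentry]
    have hjk : (r j).1 = (r k).1 ↔ j = k := by
      simp only [r]
      constructor
      · intro h; exact Fin.castSucc_injective _ (by exact_mod_cast h)
      · rintro rfl; rfl
    fin_cases j <;> fin_cases k <;> simp_all [hjk]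
  have hunit : IsUnit (!![0, 1; 1, 0] : Matrix (Fin 2) (Fin 2) (ZMod 2)) := by
    rw [Matrix.isUnit_iff_isUnit_det]
    decide
  have hge : 2 ≤ A.rank := by
    have h1 : (!![0, 1; 1, 0] : Matrix (Fin 2) (Fin 2) (ZMod 2)).rank = 2 := by
      rw [Matrix.rank_of_isUnit _ hunit]; simp
    calc (2 : ℕ) = (B * A * C).rank := by rw [hBAC, h1]
    _ = (B * (A * C)).rank := by rw [Matrix.mul_assoc]
    _ ≤ (A * C).rank := Matrix.rank_mul_le_right B (A * C)
    _ ≤ A.rank := Matrix.rank_mul_le_left A C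
  omega
end

section
/- Let k ≥ 5 be an integer with k not congruent to 2 modulo 6, and define s(k) by: s(k) = 0 if k ≡ 0 (mod 6), s(k) = 10 if k ≡ 1 (mod 6), s(k) = 6 if k ≡ 3 (mod 6), s(k) = 4 if k ≡ 4 (mod 6), s(k) = 6 if k ≡ 5 (mod 6). Then ∑_{t=0}^{⌊(k−5)/2⌋} ( 2·⌊(2k−4t−1)/6⌋ − 1 ) = (k² − 5k + s(k))/6, where ⌊·⌋ denotes integer floor division and the right-hand side is an exact integer division. -/
theorem ragsdale_gain_sum (k : ℕ) (hk : 5 ≤ k) (h2 : k % 6 ≠ 2) (s : ℤ)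
    (hs0 : k % 6 = 0 → s = 0)
    (hs1 : k % 6 = 1 → s = 10)
    (hs3 : k % 6 = 3 → s = 6)
    (hs4 : k % 6 = 4 → s = 4)
    (hs5 : k % 6 = 5 → s = 6) :
    ∑ t ∈ Finset.range ((k - 5) / 2 + 1),
      (2 * ((2 * (k : ℤ) - 4 * (t : ℤ) - 1) / 6) - 1)
      = ((k : ℤ) ^ 2 - 5 * (k : ℤ) + s) / 6 := by
  induction k using Nat.strong_induction_on generalizing s with
  | _ k ih =>
  by_cases hk11 : k < 11
  · interval_cases k
    · have := hs5 rfl; subst this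
      norm_num [Finset.sum_range_succ]
    · have := hs0 rfl; subst this
      norm_num [Finset.sum_range_succ]
    · have := hs1 rfl; subst this
      norm_num [Finset.sum_range_succ]
    · exact absurd rfl h2
    · have := hs3 rfl; subst this
      norm_num [Finset.sum_range_succ]
    · have := hs4 rfl; subst this
      norm_num [Finset.sum_range_succ]
  · push_neg at hk11
    have hrange : (k - 5) / 2 + 1 = ((k - 6 - 5) / 2 + 1) + 3 := by omega
    rw [hrange]
    rw [Finset.sum_range_succ', Finset.sum_range_succ', Finset.sum_range_succ']
    have hmod : (k - 6) % 6 = k % 6 := by omega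
    have hsum : ∑ i ∈ Finset.range ((k - 6 - 5) / 2 + 1),
        (2 * ((2 * (k : ℤ) - 4 * ((i + 1 + 1 + 1 : ℕ) : ℤ) - 1) / 6) - 1)
        = ∑ i ∈ Finset.range ((k - 6 - 5) / 2 + 1),
        (2 * ((2 * ((k - 6 : ℕ) : ℤ) - 4 * (i : ℤ) - 1) / 6) - 1) := by
      refine Finset.sum_congr rfl fun i _ => ?_
      have hc : ((k - 6 : ℕ) : ℤ) = (k : ℤ) - 6 := by omega
      have : (2 * (k : ℤ) - 4 * ((i + 1 + 1 + 1 : ℕ) : ℤ) - 1)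
          = 2 * ((k : ℤ) - 6) - 4 * (i : ℤ) - 1 := by push_cast; ring
      rw [this, hc]
    rw [hsum, ih (k - 6) (by omega) (by omega) (by omega) s
      (fun h => hs0 (by omega)) (fun h => hs1 (by omega)) (fun h => hs3 (by omega))
      (fun h => hs4 (by omega)) (fun h => hs5 (by omega))]
    have hc : ((k - 6 : ℕ) : ℤ) = (k : ℤ) - 6 := by omega
    rw [hc]
    have e1 : ((k : ℤ) - 6) ^ 2 - 5 * ((k : ℤ) - 6) + s
        = ((k : ℤ) ^ 2 - 5 * (k : ℤ) + s) - 6 * (2 * (k : ℤ) - 11) := by ring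
    rw [e1]
    push_cast
    generalize (k : ℤ) ^ 2 - 5 * (k : ℤ) + s = Y
    omega
end
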